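/- Let a < b be real numbers, let 1 ≤ p < ∞, and let u : [a, b] → ℝ be twice continuously differentiable on [a, b]. Then for every ε with 0 < ε ≤ b − a, ‖u′‖_{L^p(a,b)} ≤ ε · ‖u″‖_{L^p(a,b)} + 36 · ε^{−1} · ‖u‖_{L^p(a,b)}. -/

import Mathlib

/-!
Put `h = ε / 2` and, for `x ∈ [a, b]`, let `J_x = fitWindow b h x` be the interval `[x, x + h]`,
moved left to end at `b` when it sticks out of `[a, b]`. In the left and right thirds of `J_x`
the function `|u|` takes values at most its mean, at points `y < z` with `z - y ≥ h / 3`. The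
slope of `u` between them is a value of `u'`, and `u'` oscillates on `J_x` by at most
`∫_{J_x} |u''|`, so `|u'(x)| ≤ 9 h⁻² ∫_{J_x} |u| + ∫_{J_x} |u''|`.

The averaging operator `F ↦ (x ↦ ∫_{J_x} F)` has norm at most `2 h` on `L^p(a, b)`: apply
Jensen on each window, then Fubini, using that every `t` lies in `J_x` only for `x` in a set of
measure at most `2 h`. Minkowski's inequality finishes, with `2 h = ε` and
`9 h⁻² · 2 h = 36 ε⁻¹`.
-/

open MeasureTheory Set intervalIntegral
open scoped ENNReal Interval

theorem exists_mul_abs_le_setIntegral_abs {f : ℝ → ℝ} {c d : ℝ} (hcd : c < d)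
    (hf : IntegrableOn f (Icc c d)) :
    ∃ y ∈ Icc c d, (d - c) * |f y| ≤ ∫ t in Icc c d, |f t| := by
  obtain ⟨y, hy, hle⟩ := exists_le_setAverage (f := fun t => |f t|)
    (by simp [hcd]) (by simp) hf.abs
  rw [setAverage_eq, Real.volume_real_Icc_of_le hcd.le, smul_eq_mul,
    le_inv_mul_iff₀ (sub_pos.2 hcd)] at hle
  exact ⟨y, hy, hle⟩

theorem abs_sub_le_setIntegral_abs_deriv {f f' : ℝ → ℝ} {c d : ℝ}
    (hf : ∀ x ∈ Icc c d, HasDerivWithinAt f (f' x) (Icc c d) x)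
    (hf' : IntegrableOn f' (Icc c d)) {x y : ℝ} (hx : x ∈ Icc c d) (hy : y ∈ Icc c d) :
    |f y - f x| ≤ ∫ t in Icc c d, |f' t| := by
  have hsub : uIcc x y ⊆ Icc c d := uIcc_subset_Icc hx hy
  have hftc : ∫ t in x..y, f' t = f y - f x := by
    refine integral_eq_sub_of_hasDeriv_right
      (fun s hs => (hf s (hsub hs)).continuousWithinAt.mono hsub) (fun s hs => ?_)
      ((hf'.mono_set hsub).intervalIntegrable)
    have hs' : s ∈ Ioo c d :=
      ⟨(le_min hx.1 hy.1).trans_lt hs.1, hs.2.trans_le (max_le hx.2 hy.2)⟩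
    exact ((hf s (Ioo_subset_Icc_self hs')).hasDerivAt
      (Icc_mem_nhds hs'.1 hs'.2)).hasDerivWithinAt
  rw [← hftc]
  calc |∫ t in x..y, f' t| ≤ ∫ t in Ι x y, |f' t| := by
        simpa only [Real.norm_eq_abs] using
          norm_integral_le_integral_norm_uIoc (f := f') (μ := volume)
    _ ≤ ∫ t in Icc c d, |f' t| :=
        setIntegral_mono_set hf'.abs (.of_forall fun _ => abs_nonneg _)
          (uIoc_subset_uIcc.trans hsub).eventuallyLE

theorem setIntegral_Icc_add_setIntegral_Icc_le {f : ℝ → ℝ} {c c' d' d : ℝ} (hc : c ≤ c')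
    (hc' : c' < d') (hd : d' ≤ d) (hf : IntegrableOn f (Icc c d)) (hf0 : ∀ t, 0 ≤ f t) :
    (∫ t in Icc c c', f t) + ∫ t in Icc d' d, f t ≤ ∫ t in Icc c d, f t := by
  have hleft : Icc c c' ⊆ Icc c d := Icc_subset_Icc le_rfl (hc'.le.trans hd)
  have hright : Icc d' d ⊆ Icc c d := Icc_subset_Icc (hc.trans hc'.le) le_rfl
  have hdisj : Disjoint (Icc c c') (Icc d' d) :=
    disjoint_left.2 fun t ht₁ ht₂ => (ht₁.2.trans_lt hc').not_ge ht₂.1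
  rw [← setIntegral_union hdisj measurableSet_Icc (hf.mono_set hleft) (hf.mono_set hright)]
  exact setIntegral_mono_set hf (.of_forall hf0) (union_subset hleft hright).eventuallyLE

theorem abs_deriv_le_setIntegral_abs_add_setIntegral_abs {u u' u'' : ℝ → ℝ} {c d : ℝ}
    (hcd : c < d) (hu : ∀ x ∈ Icc c d, HasDerivWithinAt u (u' x) (Icc c d) x)
    (hu' : ∀ x ∈ Icc c d, HasDerivWithinAt u' (u'' x) (Icc c d) x)
    (hu'' : IntegrableOn u'' (Icc c d)) {x : ℝ} (hx : x ∈ Icc c d) :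
    |u' x| ≤ 9 / (d - c) ^ 2 * (∫ t in Icc c d, |u t|) + ∫ t in Icc c d, |u'' t| := by
  set ℓ := (d - c) / 3 with hℓ_def
  have hℓ : 0 < ℓ := by positivity
  have hucont : ContinuousOn u (Icc c d) := fun x hx => (hu x hx).continuousWithinAt
  obtain ⟨y, hy, hyu⟩ := exists_mul_abs_le_setIntegral_abs (by linarith : c < c + ℓ)
    ((hucont.mono (Icc_subset_Icc le_rfl (by linarith))).integrableOn_Icc)
  obtain ⟨z, hz, hzu⟩ := exists_mul_abs_le_setIntegral_abs (by linarith : d - ℓ < d)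
    ((hucont.mono (Icc_subset_Icc (by linarith) le_rfl)).integrableOn_Icc)
  rw [add_sub_cancel_left] at hyu
  rw [sub_sub_cancel] at hzu
  have hyz : ℓ ≤ z - y := by linarith [hy.2, hz.1]
  have hyz_sub : Icc y z ⊆ Icc c d := Icc_subset_Icc hy.1 hz.2
  obtain ⟨ξ, hξ, hslope⟩ :=
    exists_hasDerivAt_eq_slope u u' (by linarith) (hucont.mono hyz_sub) fun s hs =>
      (hu s (hyz_sub (Ioo_subset_Icc_self hs))).hasDerivAt
        (Icc_mem_nhds (hy.1.trans_lt hs.1) (hs.2.trans_le hz.2))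
  have hosc : |u' x - u' ξ| ≤ ∫ t in Icc c d, |u'' t| :=
    abs_sub_le_setIntegral_abs_deriv hu' hu'' (hyz_sub (Ioo_subset_Icc_self hξ)) hx
  have hsplit := setIntegral_Icc_add_setIntegral_Icc_le (f := fun t => |u t|)
    (by linarith : c ≤ c + ℓ) (by linarith : c + ℓ < d - ℓ) (by linarith : d - ℓ ≤ d)
    hucont.abs.integrableOn_Icc (fun t => abs_nonneg _)
  have hslope_le : |u' ξ| ≤ (|u y| + |u z|) / ℓ := by
    rw [hslope, abs_div, abs_of_pos (by linarith : 0 < z - y)]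
    exact div_le_div₀ (by positivity) ((abs_sub _ _).trans_eq (add_comm _ _)) hℓ hyz
  calc |u' x| ≤ |u' ξ| + |u' x - u' ξ| := by linarith [abs_sub_abs_le_abs_sub (u' x) (u' ξ)]
    _ ≤ (|u y| + |u z|) / ℓ + ∫ t in Icc c d, |u'' t| := add_le_add hslope_le hosc
    _ ≤ 9 / (d - c) ^ 2 * (∫ t in Icc c d, |u t|) + ∫ t in Icc c d, |u'' t| := by
        gcongr
        calc (|u y| + |u z|) / ℓ = (ℓ * |u y| + ℓ * |u z|) / ℓ ^ 2 := by field_simp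
          _ ≤ (∫ t in Icc c d, |u t|) / ℓ ^ 2 := by gcongr; linarith
          _ = 9 / (d - c) ^ 2 * ∫ t in Icc c d, |u t| := by rw [hℓ_def]; field_simp; ring

theorem lintegral_setLIntegral_preimage_prodMk_le {α β : Type*} [MeasurableSpace α]
    [MeasurableSpace β] {μ : Measure α} {ν : Measure β} [SFinite μ] [SFinite ν]
    {S : Set (α × β)} (hS : MeasurableSet S) (F : β → ℝ≥0∞) {C : ℝ≥0∞}
    (hC : ∀ y, μ ((fun x => (x, y)) ⁻¹' S) ≤ C) :
    ∫⁻ x, ∫⁻ y in Prod.mk x ⁻¹' S, F y ∂ν ∂μ ≤ C * ∫⁻ y, F y ∂ν := by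
  calc ∫⁻ x, ∫⁻ y in Prod.mk x ⁻¹' S, F y ∂ν ∂μ
      = μ.prod (ν.withDensity F) S := by
        simp only [Measure.prod_apply hS, withDensity_apply']
    _ = ∫⁻ y, μ ((fun x => (x, y)) ⁻¹' S) ∂ν.withDensity F := Measure.prod_apply_symm hS
    _ ≤ ∫⁻ _, C ∂ν.withDensity F := lintegral_mono hC
    _ = C * ∫⁻ y, F y ∂ν := by
        rw [lintegral_const, withDensity_apply' _ univ, Measure.restrict_univ]

theorem rpow_lintegral_le_measure_univ_rpow_mul {α : Type*} [MeasurableSpace α] {μ : Measure α}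
    {p : ℝ} (hp : 1 ≤ p) {F : α → ℝ≥0∞} (hF : AEMeasurable F μ) :
    (∫⁻ x, F x ∂μ) ^ p ≤ μ univ ^ (p - 1) * ∫⁻ x, F x ^ p ∂μ := by
  have hp0 : 0 < p := zero_lt_one.trans_le hp
  have key := eLpNorm_le_eLpNorm_mul_rpow_measure_univ (p := 1) (q := ENNReal.ofReal p)
    (by simpa using hp) hF.aestronglyMeasurable
  rw [eLpNorm_one_eq_lintegral_enorm, eLpNorm_eq_lintegral_rpow_enorm_toReal (by simpa using hp0)
    ENNReal.ofReal_ne_top, ENNReal.toReal_ofReal hp0.le] at key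
  simp only [enorm_eq_self, ENNReal.toReal_one] at key
  calc (∫⁻ x, F x ∂μ) ^ p
      ≤ ((∫⁻ x, F x ^ p ∂μ) ^ (1 / p) * μ univ ^ (1 / 1 - 1 / p)) ^ p :=
        ENNReal.rpow_le_rpow key hp0.le
    _ = μ univ ^ (p - 1) * ∫⁻ x, F x ^ p ∂μ := by
        rw [ENNReal.mul_rpow_of_nonneg _ _ hp0.le, ← ENNReal.rpow_mul, ← ENNReal.rpow_mul,
          one_div_mul_cancel hp0.ne', ENNReal.rpow_one, mul_comm]
        congr 2
        field_simp

def fitWindow (b h x : ℝ) : Set ℝ := Icc (min x (b - h)) (min x (b - h) + h)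

section fitWindow

variable {a b h x : ℝ}

theorem measurableSet_fitWindow_graph (b h : ℝ) :
    MeasurableSet {q : ℝ × ℝ | q.2 ∈ fitWindow b h q.1} := by
  have hc : Continuous fun q : ℝ × ℝ => min q.1 (b - h) := continuous_fst.min continuous_const
  exact ((isClosed_le hc continuous_snd).inter
    (isClosed_le continuous_snd (hc.add continuous_const))).measurableSet

theorem measurable_setLIntegral_fitWindow (b h : ℝ) (F : ℝ → ℝ≥0∞) :
    Measurable fun x => ∫⁻ t in fitWindow b h x, F t := by
  simp only [← withDensity_apply']
  exact measurable_measure_prodMk_left (measurableSet_fitWindow_graph b h)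

theorem self_mem_fitWindow (hh : 0 ≤ h) (hxb : x ≤ b) : x ∈ fitWindow b h x := by
  refine ⟨min_le_left _ _, ?_⟩
  rcases le_total x (b - h) with hx | hx
  · rw [min_eq_left hx]; linarith
  · rw [min_eq_right hx]; linarith

theorem fitWindow_subset_Icc (hax : a ≤ x) (hhb : h ≤ b - a) : fitWindow b h x ⊆ Icc a b :=
  Icc_subset_Icc (le_min hax (by linarith)) (by linarith [min_le_right x (b - h)])

theorem volume_fitWindow : volume (fitWindow b h x) = ENNReal.ofReal h := by
  rw [fitWindow, Real.volume_Icc, add_sub_cancel_left]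

theorem volume_restrict_setOf_mem_fitWindow_le (hh : 0 ≤ h) (t : ℝ) :
    volume.restrict (Icc a b) {x | t ∈ fitWindow b h x} ≤ ENNReal.ofReal (2 * h) := by
  have hsub : {x | t ∈ fitWindow b h x} ∩ Icc a b ⊆ Icc (t - h) t ∪ Icc (b - h) b := by
    rintro x ⟨⟨ht₁, ht₂⟩, -, hxb⟩
    rcases le_total x (b - h) with hx | hx
    · rw [min_eq_left hx] at ht₁ ht₂
      exact Or.inl ⟨by linarith, ht₁⟩
    · exact Or.inr ⟨hx, hxb⟩
  calc volume.restrict (Icc a b) {x | t ∈ fitWindow b h x}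
      ≤ volume (Icc (t - h) t ∪ Icc (b - h) b) :=
        (Measure.restrict_apply' measurableSet_Icc).trans_le (measure_mono hsub)
    _ ≤ volume (Icc (t - h) t) + volume (Icc (b - h) b) := measure_union_le _ _
    _ = ENNReal.ofReal (2 * h) := by
        rw [Real.volume_Icc, Real.volume_Icc, ← ENNReal.ofReal_add (by linarith) (by linarith)]
        ring_nf

theorem lintegral_setLIntegral_fitWindow_le (hh : 0 ≤ h) (hhb : h ≤ b - a)
    (F : ℝ → ℝ≥0∞) :
    ∫⁻ x in Icc a b, ∫⁻ t in fitWindow b h x, F t ≤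
      ENNReal.ofReal (2 * h) * ∫⁻ t in Icc a b, F t := by
  calc ∫⁻ x in Icc a b, ∫⁻ t in fitWindow b h x, F t
      = ∫⁻ x in Icc a b, ∫⁻ t in fitWindow b h x, F t ∂volume.restrict (Icc a b) := by
        refine setLIntegral_congr_fun measurableSet_Icc fun x hx => ?_
        rw [Measure.restrict_restrict (by exact measurableSet_Icc),
          inter_eq_left.2 (fitWindow_subset_Icc hx.1 hhb)]
    _ ≤ ENNReal.ofReal (2 * h) * ∫⁻ t in Icc a b, F t :=
        lintegral_setLIntegral_preimage_prodMk_le (measurableSet_fitWindow_graph b h) F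
          (volume_restrict_setOf_mem_fitWindow_le hh)

theorem eLpNorm_setLIntegral_fitWindow_le {p : ℝ} (hp : 1 ≤ p) (hh : 0 ≤ h)
    (hhb : h ≤ b - a) {F : ℝ → ℝ≥0∞} (hF : AEMeasurable F (volume.restrict (Icc a b))) :
    eLpNorm (fun x => ∫⁻ t in fitWindow b h x, F t) (ENNReal.ofReal p)
        (volume.restrict (Icc a b)) ≤
      ENNReal.ofReal (2 * h) * eLpNorm F (ENNReal.ofReal p) (volume.restrict (Icc a b)) := by
  have hp0 : 0 < p := zero_lt_one.trans_le hp
  simp only [eLpNorm_eq_lintegral_rpow_enorm_toReal (ENNReal.ofReal_pos.2 hp0).ne'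
    ENNReal.ofReal_ne_top, ENNReal.toReal_ofReal hp0.le, enorm_eq_self]
  have hholder : ∀ x ∈ Icc a b, (∫⁻ t in fitWindow b h x, F t) ^ p ≤
      ENNReal.ofReal h ^ (p - 1) * ∫⁻ t in fitWindow b h x, F t ^ p := fun x hx => by
    simpa [volume_fitWindow] using rpow_lintegral_le_measure_univ_rpow_mul hp
      (hF.mono_measure (Measure.restrict_mono (fitWindow_subset_Icc hx.1 hhb) le_rfl))
  have hpow : ∫⁻ x in Icc a b, (∫⁻ t in fitWindow b h x, F t) ^ p ≤
      ENNReal.ofReal (2 * h) ^ p * ∫⁻ t in Icc a b, F t ^ p :=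
    calc ∫⁻ x in Icc a b, (∫⁻ t in fitWindow b h x, F t) ^ p
        ≤ ∫⁻ x in Icc a b,
            ENNReal.ofReal h ^ (p - 1) * ∫⁻ t in fitWindow b h x, F t ^ p :=
          setLIntegral_mono' measurableSet_Icc hholder
      _ = ENNReal.ofReal h ^ (p - 1) * ∫⁻ x in Icc a b, ∫⁻ t in fitWindow b h x, F t ^ p :=
          lintegral_const_mul _ (measurable_setLIntegral_fitWindow b h _)
      _ ≤ ENNReal.ofReal (2 * h) ^ (p - 1) *
            (ENNReal.ofReal (2 * h) * ∫⁻ t in Icc a b, F t ^ p) := by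
          gcongr
          · linarith
          · exact lintegral_setLIntegral_fitWindow_le hh hhb _
      _ = ENNReal.ofReal (2 * h) ^ p * ∫⁻ t in Icc a b, F t ^ p := by
          rw [← mul_assoc]
          congr 1
          nth_rw 2 [← ENNReal.rpow_one (ENNReal.ofReal (2 * h))]
          rw [← ENNReal.rpow_add_of_nonneg _ _ (by linarith) zero_le_one, sub_add_cancel]
  calc (∫⁻ x in Icc a b, (∫⁻ t in fitWindow b h x, F t) ^ p) ^ (1 / p)
      ≤ (ENNReal.ofReal (2 * h) ^ p * ∫⁻ t in Icc a b, F t ^ p) ^ (1 / p) := by gcongr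
    _ = ENNReal.ofReal (2 * h) * (∫⁻ t in Icc a b, F t ^ p) ^ (1 / p) := by
        rw [ENNReal.mul_rpow_of_nonneg _ _ (by positivity), ← ENNReal.rpow_mul,
          mul_one_div_cancel hp0.ne', ENNReal.rpow_one]

end fitWindow

section deriv

variable {a b h : ℝ} {u u' u'' : ℝ → ℝ}

theorem enorm_deriv_le_setLIntegral_fitWindow (hh : 0 < h) (hhb : h ≤ b - a)
    (hu : ∀ x ∈ Icc a b, HasDerivWithinAt u (u' x) (Icc a b) x)
    (hu' : ∀ x ∈ Icc a b, HasDerivWithinAt u' (u'' x) (Icc a b) x)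
    (hu'' : IntegrableOn u'' (Icc a b)) {x : ℝ} (hx : x ∈ Icc a b) :
    ‖u' x‖ₑ ≤ ENNReal.ofReal (9 / h ^ 2) * (∫⁻ t in fitWindow b h x, ‖u t‖ₑ) +
      ∫⁻ t in fitWindow b h x, ‖u'' t‖ₑ := by
  have hJ := fitWindow_subset_Icc hx.1 hhb
  have hJu : IntegrableOn u (fitWindow b h x) :=
    (ContinuousOn.integrableOn_Icc fun y hy => (hu y hy).continuousWithinAt).mono_set hJ
  have key := abs_deriv_le_setIntegral_abs_add_setIntegral_abs
    (by linarith : min x (b - h) < min x (b - h) + h)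
    (fun y hy => (hu y (hJ hy)).mono hJ) (fun y hy => (hu' y (hJ hy)).mono hJ) (hu''.mono_set hJ)
    (self_mem_fitWindow hh.le hx.2)
  simp_rw [add_sub_cancel_left, ← Real.norm_eq_abs] at key
  have hW : fitWindow b h x = Icc (min x (b - h)) (min x (b - h) + h) := rfl
  rw [hW] at hJ hJu
  rw [hW, ← ofReal_norm, ← ofReal_integral_norm_eq_lintegral_enorm hJu,
    ← ofReal_integral_norm_eq_lintegral_enorm (hu''.mono_set hJ),
    ← ENNReal.ofReal_mul (by positivity), ← ENNReal.ofReal_add (by positivity) (by positivity)]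
  exact ENNReal.ofReal_le_ofReal key

theorem eLpNorm_deriv_le {p : ℝ} (hp : 1 ≤ p) (hh : 0 < h) (hhb : h ≤ b - a)
    (hu : ∀ x ∈ Icc a b, HasDerivWithinAt u (u' x) (Icc a b) x)
    (hu' : ∀ x ∈ Icc a b, HasDerivWithinAt u' (u'' x) (Icc a b) x)
    (hu'' : IntegrableOn u'' (Icc a b)) :
    eLpNorm u' (ENNReal.ofReal p) (volume.restrict (Icc a b)) ≤
      ENNReal.ofReal (2 * h) * eLpNorm u'' (ENNReal.ofReal p) (volume.restrict (Icc a b)) +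
        ENNReal.ofReal (18 / h) * eLpNorm u (ENNReal.ofReal p) (volume.restrict (Icc a b)) := by
  set q := ENNReal.ofReal p
  set μ := volume.restrict (Icc a b)
  have hq : 1 ≤ q := by simpa [q] using hp
  have hucont : ContinuousOn u (Icc a b) := fun x hx => (hu x hx).continuousWithinAt
  set A : (ℝ → ℝ) → ℝ → ℝ≥0∞ := fun f x => ∫⁻ t in fitWindow b h x, ‖f t‖ₑ
  have hmeas : ∀ f, Measurable (A f) := fun f => measurable_setLIntegral_fitWindow b h _
  have havg : ∀ f, AEStronglyMeasurable f μ →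
      eLpNorm (A f) q μ ≤ ENNReal.ofReal (2 * h) * eLpNorm f q μ := fun f hf => by
    simpa only [eLpNorm_enorm] using eLpNorm_setLIntegral_fitWindow_le hp hh.le hhb hf.enorm
  calc eLpNorm u' q μ
      ≤ eLpNorm (fun x => ENNReal.ofReal (9 / h ^ 2) * A u x + A u'' x) q μ :=
        eLpNorm_mono_enorm_ae (ae_restrict_of_forall_mem measurableSet_Icc fun x hx =>
          (enorm_deriv_le_setLIntegral_fitWindow hh hhb hu hu' hu'' hx).trans_eq
            (enorm_eq_self _).symm)
    _ ≤ ENNReal.ofReal (9 / h ^ 2) * eLpNorm (A u) q μ + eLpNorm (A u'') q μ := by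
        refine (eLpNorm_add_le ((hmeas u).const_mul _).aestronglyMeasurable
          (hmeas u'').aestronglyMeasurable hq).trans ?_
        gcongr
        exact eLpNorm_le_nnreal_smul_eLpNorm_of_ae_le_mul' (.of_forall fun x => le_rfl) _
    _ ≤ ENNReal.ofReal (9 / h ^ 2) * (ENNReal.ofReal (2 * h) * eLpNorm u q μ) +
          ENNReal.ofReal (2 * h) * eLpNorm u'' q μ := by
        gcongr
        · exact havg u (hucont.aestronglyMeasurable measurableSet_Icc)
        · exact havg u'' hu''.aestronglyMeasurable
    _ = _ := by
        rw [← mul_assoc, ← ENNReal.ofReal_mul (by positivity), add_comm]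
        congr 3
        field_simp
        ring

end deriv

theorem ContinuousOn.memLp_restrict_Icc {E : Type*} [NormedAddCommGroup E] {f : ℝ → E}
    {a b : ℝ} (hf : ContinuousOn f (Icc a b)) (p : ℝ≥0∞) :
    MemLp f p (volume.restrict (Icc a b)) :=
  let ⟨C, hC⟩ := isCompact_Icc.exists_bound_of_continuousOn hf
  .of_bound (hf.aestronglyMeasurable measurableSet_Icc) C
    (ae_restrict_of_forall_mem measurableSet_Icc hC)

theorem rpow_setIntegral_Ioo_abs_rpow_eq_toReal_eLpNorm {f : ℝ → ℝ} {a b p : ℝ} (hp : 0 < p)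
    (hf : ContinuousOn f (Icc a b)) :
    (∫ t in Ioo a b, |f t| ^ p) ^ (1 / p) =
      (eLpNorm f (ENNReal.ofReal p) (volume.restrict (Icc a b))).toReal := by
  rw [(hf.memLp_restrict_Icc _).eLpNorm_eq_integral_rpow_norm (by simpa using hp)
    ENNReal.ofReal_ne_top, ENNReal.toReal_ofReal (by positivity), ENNReal.toReal_ofReal hp.le,
    integral_Icc_eq_integral_Ioo, one_div]
  simp only [Real.norm_eq_abs]

theorem deriv_Lp_interpolation_general (a b : ℝ) (p : ℝ) (hp : 1 ≤ p) (u u' u'' : ℝ → ℝ)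
    (hu' : ∀ x ∈ Set.Icc a b, HasDerivWithinAt u (u' x) (Set.Icc a b) x)
    (hu'' : ∀ x ∈ Set.Icc a b, HasDerivWithinAt u' (u'' x) (Set.Icc a b) x)
    (hcont : ContinuousOn u'' (Set.Icc a b)) :
    ∀ ε : ℝ, 0 < ε → ε ≤ b - a →
      (∫ t in Set.Ioo a b, |u' t| ^ p) ^ (1 / p) ≤
        ε * (∫ t in Set.Ioo a b, |u'' t| ^ p) ^ (1 / p) +
          36 * ε⁻¹ * (∫ t in Set.Ioo a b, |u t| ^ p) ^ (1 / p) := by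
  intro ε hε hεb
  have hp0 : 0 < p := zero_lt_one.trans_le hp
  have hu_cont : ContinuousOn u (Icc a b) := fun x hx => (hu' x hx).continuousWithinAt
  have hu'_cont : ContinuousOn u' (Icc a b) := fun x hx => (hu'' x hx).continuousWithinAt
  have key := eLpNorm_deriv_le hp (half_pos hε) (by linarith) hu' hu'' hcont.integrableOn_Icc
  rw [mul_div_cancel₀ ε two_ne_zero, show 18 / (ε / 2) = 36 * ε⁻¹ by ring] at key
  have hu''_fin := (hcont.memLp_restrict_Icc (ENNReal.ofReal p)).eLpNorm_ne_top
  have hu_fin := (hu_cont.memLp_restrict_Icc (ENNReal.ofReal p)).eLpNorm_ne_top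
  rw [rpow_setIntegral_Ioo_abs_rpow_eq_toReal_eLpNorm hp0 hu'_cont,
    rpow_setIntegral_Ioo_abs_rpow_eq_toReal_eLpNorm hp0 hcont,
    rpow_setIntegral_Ioo_abs_rpow_eq_toReal_eLpNorm hp0 hu_cont]
  refine (ENNReal.toReal_mono (by finiteness) key).trans_eq ?_
  rw [ENNReal.toReal_add (by finiteness) (by finiteness), ENNReal.toReal_mul, ENNReal.toReal_mul,
    ENNReal.toReal_ofReal hε.le, ENNReal.toReal_ofReal (by positivity)]

/-- If `u` is twice continuously differentiable on `[a, b]` and `1 ≤ p < ∞`,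
then for every `ε` with `0 < ε ≤ b - a` one has
`‖u'‖_{L^p(a,b)} ≤ ε ‖u''‖_{L^p(a,b)} + 36 ε⁻¹ ‖u‖_{L^p(a,b)}`. -/
theorem deriv_Lp_interpolation (a b : ℝ) (hab : a < b) (p : ℝ) (hp : 1 ≤ p) (u u' u'' : ℝ → ℝ)
    (hu' : ∀ x ∈ Set.Icc a b, HasDerivWithinAt u (u' x) (Set.Icc a b) x)
    (hu'' : ∀ x ∈ Set.Icc a b, HasDerivWithinAt u' (u'' x) (Set.Icc a b) x)
    (hcont : ContinuousOn u'' (Set.Icc a b)) :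
    ∀ ε : ℝ, 0 < ε → ε ≤ b - a →
      (∫ t in Set.Ioo a b, |u' t| ^ p) ^ (1 / p) ≤
        ε * (∫ t in Set.Ioo a b, |u'' t| ^ p) ^ (1 / p) +
          36 * ε⁻¹ * (∫ t in Set.Ioo a b, |u t| ^ p) ^ (1 / p) :=
  deriv_Lp_interpolation_general a b p hp u u' u'' hu' hu'' hcont
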